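/- arXiv:1308.3388 — 2 statements merged into one kernel-verified Lean document; each statement's English description precedes it below -/
import Mathlib

section
/- In the ILT model, for distinct nodes x, y of G_t with clones x', y' in G_{t+1}: if xy is not an edge of G_t then d_{t+1}(x', y') = d_t(x, y), and if xy is an edge of G_t then d_{t+1}(x', y') = 2 = d_t(x,y) + 1. -/
open SimpleGraph Finset

universe u
variable {V : Type u}

/-- One step of the Iterated Local Transitivity model: every vertex `x` gets a
clone `Sum.inr x` joined to `x` and all of its neighbours; old vertices are `Sum.inl`. -/
def ILTstep (G : SimpleGraph V) : SimpleGraph (V ⊕ V) where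
  Adj a b := match a, b with
    | Sum.inl x, Sum.inl y => G.Adj x y
    | Sum.inl x, Sum.inr y => x = y ∨ G.Adj x y
    | Sum.inr x, Sum.inl y => x = y ∨ G.Adj x y
    | Sum.inr _, Sum.inr _ => False
  symm := by
    constructor
    rintro (x | x) (y | y) h
    · exact G.adj_symm h
    · exact h.imp Eq.symm (fun hh => G.adj_symm hh)
    · exact h.imp Eq.symm (fun hh => G.adj_symm hh)
    · exact h.elim
  loopless := by
    constructor
    rintro (x | x) h
    · exact G.irrefl h
    · exact h

instance ILTstepDecAdj (G : SimpleGraph V) [DecidableEq V] [DecidableRel G.Adj] :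
    DecidableRel (ILTstep G).Adj := fun a b =>
  match a, b with
  | Sum.inl x, Sum.inl y => inferInstanceAs (Decidable (G.Adj x y))
  | Sum.inl x, Sum.inr y => inferInstanceAs (Decidable (x = y ∨ G.Adj x y))
  | Sum.inr x, Sum.inl y => inferInstanceAs (Decidable (x = y ∨ G.Adj x y))
  | Sum.inr _, Sum.inr _ => inferInstanceAs (Decidable False)

/-- The vertex set of the ILT model at time `t`. -/
def ILTV (V : Type u) : ℕ → Type u
  | 0 => V
  | t + 1 => ILTV V t ⊕ ILTV V t

/-- The graph of the ILT model at time `t`, starting from `G`. -/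
def ILTG (G : SimpleGraph V) : (t : ℕ) → SimpleGraph (ILTV V t)
  | 0 => G
  | t + 1 => ILTstep (ILTG G t)

instance ILTVFintype [Fintype V] : ∀ t, Fintype (ILTV V t)
  | 0 => inferInstanceAs (Fintype V)
  | t + 1 => letI := ILTVFintype t
             inferInstanceAs (Fintype (ILTV V t ⊕ ILTV V t))

instance ILTVDecEq [DecidableEq V] : ∀ t, DecidableEq (ILTV V t)
  | 0 => inferInstanceAs (DecidableEq V)
  | t + 1 => letI := ILTVDecEq t
             inferInstanceAs (DecidableEq (ILTV V t ⊕ ILTV V t))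

instance ILTGDecAdj (G : SimpleGraph V) [DecidableEq V] [DecidableRel G.Adj] :
    ∀ t, DecidableRel (ILTG G t).Adj
  | 0 => inferInstanceAs (DecidableRel G.Adj)
  | t + 1 => letI : DecidableEq (ILTV V t) := ILTVDecEq t
             letI : DecidableRel (ILTG G t).Adj := ILTGDecAdj G t
             ILTstepDecAdj (ILTG G t)

/-- The volume of a graph: the sum of the degrees of its vertices. -/
def graphVol [Fintype V] (G : SimpleGraph V) [DecidableRel G.Adj] : ℕ :=
  ∑ v, G.degree v

/-- The Wiener index: the sum of distances over unordered pairs of vertices. -/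
noncomputable def wienerIndex [Fintype V] (G : SimpleGraph V) : ℕ :=
  (∑ x : V, ∑ y : V, G.dist x y) / 2

/-!
Folding every clone onto its original sends each edge of `ILTstep G` to an edge of `G` or to a
single vertex, so distances in `ILTstep G` are at least those in `G`. Conversely, a shortest
`x`–`y` walk of length at least two (as when `x`, `y` are distinct and non-adjacent) lifts to a
walk `x', v₁, …, vₙ₋₁, y'` of the same length, since `x'` and `y'` inherit the neighbours of `x`
and `y`. Clones are never adjacent, and those of adjacent `x`, `y` have the common neighbour `x`.
-/

namespace SimpleGraph

variable {W : Type*} {G : SimpleGraph V} {H : SimpleGraph W}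

lemma Walk.exists_walk_length_le_of_adj_imp (f : V → W)
    (hf : ∀ ⦃a b⦄, G.Adj a b → f a = f b ∨ H.Adj (f a) (f b)) {u v : V} (p : G.Walk u v) :
    ∃ q : H.Walk (f u) (f v), q.length ≤ p.length := by
  induction p with
  | nil => exact ⟨.nil, le_rfl⟩
  | @cons a b c hab p ih =>
    obtain ⟨q, hq⟩ := ih
    rcases hf hab with hfab | hfab
    · exact ⟨q.copy hfab.symm rfl, by simp only [Walk.length_copy, Walk.length_cons]; omega⟩
    · exact ⟨.cons hfab q, by simpa using hq⟩

lemma edist_le_of_adj_imp (f : V → W)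
    (hf : ∀ ⦃a b⦄, G.Adj a b → f a = f b ∨ H.Adj (f a) (f b)) (u v : V) :
    H.edist (f u) (f v) ≤ G.edist u v := by
  by_cases htop : G.edist u v = ⊤
  · exact htop ▸ le_top
  obtain ⟨p, hp⟩ := exists_walk_of_edist_ne_top htop
  obtain ⟨q, hq⟩ := p.exists_walk_length_le_of_adj_imp f hf
  calc H.edist (f u) (f v) ≤ q.length := edist_le q
    _ ≤ p.length := by exact_mod_cast hq
    _ = G.edist u v := hp

end SimpleGraph

namespace ILTstep

open SimpleGraph

variable {G : SimpleGraph V}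

lemma elim_id_eq_or_adj_of_adj {a b : V ⊕ V} (h : (ILTstep G).Adj a b) :
    Sum.elim id id a = Sum.elim id id b ∨ G.Adj (Sum.elim id id a) (Sum.elim id id b) := by
  rcases a with a | a <;> rcases b with b | b
  · exact Or.inr h
  · exact h
  · exact h
  · exact h.elim

lemma edist_elim_id_le (a b : V ⊕ V) :
    G.edist (Sum.elim id id a) (Sum.elim id id b) ≤ (ILTstep G).edist a b :=
  edist_le_of_adj_imp _ (fun _ _ ↦ elim_id_eq_or_adj_of_adj) a b

lemma exists_walk_inl_inr {u v : V} (p : G.Walk u v) (hp : p.length ≠ 0) :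
    ∃ q : (ILTstep G).Walk (.inl u) (.inr v), q.length = p.length := by
  induction p with
  | nil => exact absurd rfl hp
  | @cons a b c hab p ih =>
    cases p with
    | nil => exact ⟨.cons (show (ILTstep G).Adj (.inl a) (.inr b) from Or.inr hab) .nil, rfl⟩
    | cons _ _ =>
      obtain ⟨q, hq⟩ := ih (by simp)
      exact ⟨.cons (show (ILTstep G).Adj (.inl a) (.inl b) from hab) q, by simp [hq]⟩

lemma exists_walk_inr_inr {u v : V} (p : G.Walk u v) (hp : 2 ≤ p.length) :
    ∃ q : (ILTstep G).Walk (.inr u) (.inr v), q.length = p.length := by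
  cases p with
  | nil => simp at hp
  | @cons _ b _ hub p =>
    obtain ⟨q, hq⟩ := exists_walk_inl_inr p (by simp at hp; omega)
    exact ⟨.cons (show (ILTstep G).Adj (.inr u) (.inl b) from Or.inr hub) q, by simp [hq]⟩

lemma edist_inr_inr_of_not_adj {x y : V} (h : ¬G.Adj x y) :
    (ILTstep G).edist (.inr x) (.inr y) = G.edist x y := by
  refine le_antisymm ?_ (edist_elim_id_le (.inr x) (.inr y))
  by_cases hxy : x = y
  · simp [hxy]
  by_cases htop : G.edist x y = ⊤
  · exact htop ▸ le_top
  obtain ⟨p, hp⟩ := exists_walk_of_edist_ne_top htop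
  have hp2 : 2 ≤ p.length := by
    have h0 : (p.length : ℕ∞) ≠ 0 := hp ▸ (edist_eq_zero_iff.not.mpr hxy)
    have h1 : (p.length : ℕ∞) ≠ 1 := hp ▸ (edist_eq_one_iff_adj.not.mpr h)
    norm_cast at h0 h1
    omega
  obtain ⟨q, hq⟩ := exists_walk_inr_inr p hp2
  exact hp ▸ hq ▸ edist_le q

lemma dist_inr_inr_of_adj {x y : V} (h : G.Adj x y) :
    (ILTstep G).dist (.inr x) (.inr y) = 2 := by
  have hcommon : Sum.inl x ∈ (ILTstep G).commonNeighbors (.inr x) (.inr y) :=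
    (mem_commonNeighbors _).mpr ⟨Or.inl rfl, Or.inr h.symm⟩
  have h2 : (ILTstep G).edist (.inr x) (.inr y) = 2 :=
    edist_eq_two_iff.mpr ⟨fun he ↦ h.ne (Sum.inr_injective he), id, ⟨_, hcommon⟩⟩
  simp [SimpleGraph.dist, h2]

end ILTstep

theorem ILT_dist_clone_clone_general (G : SimpleGraph V) (x y : V) :
    (¬ G.Adj x y → (ILTstep G).dist (Sum.inr x) (Sum.inr y) = G.dist x y) ∧
    (G.Adj x y →
      (ILTstep G).dist (Sum.inr x) (Sum.inr y) = 2 ∧ G.dist x y + 1 = 2) :=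
  ⟨fun h ↦ congrArg ENat.toNat (ILTstep.edist_inr_inr_of_not_adj h),
    fun h ↦ ⟨ILTstep.dist_inr_inr_of_adj h, by rw [dist_eq_one_iff_adj.mpr h]⟩⟩

theorem ILT_dist_clone_clone (G : SimpleGraph V) (hG : G.Connected)
    (x y : V) (hxy : x ≠ y) :
    (¬ G.Adj x y → (ILTstep G).dist (Sum.inr x) (Sum.inr y) = G.dist x y) ∧
    (G.Adj x y →
      (ILTstep G).dist (Sum.inr x) (Sum.inr y) = 2 ∧ G.dist x y + 1 = 2) :=
  ILT_dist_clone_clone_general G x y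
end

section
/- In the ILT model, if the initial connected graph G_0 is not a complete graph, then diam(G_t) = diam(G_0) for all t ≥ 0; if G_0 is a complete graph with at least two vertices, then diam(G_t) = 2 for all t ≥ 1. -/
open SimpleGraph Finset

universe u
variable {V : Type u}

/-!
In `ILTstep G` the embedding `x ↦ inl x` is isometric, collapsing each clone onto its parent
does not increase distances, and a shortest `G`-path from `x` to `y` can be rerouted to end at
(or start from) a clone at the same length; only two clones of equal or adjacent vertices need a
detour of length 2. Hence `ediam G ≤ ediam (ILTstep G) ≤ max (ediam G) 2`, so the extended
diameter is invariant from the first time it is at least 2. That holds at time 0 for every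
non-complete `G` (a disconnected one has `ediam = ⊤`), and at time 1 for a complete `G` on at
least two vertices, whose distinct clones are non-adjacent.
-/

namespace SimpleGraph

variable {W : Type*} {G : SimpleGraph V} {H : SimpleGraph W}

lemma edist_apply_le_of_adj (f : V → W)
    (hf : ∀ ⦃x y⦄, G.Adj x y → H.edist (f x) (f y) ≤ 1) (x y : V) :
    H.edist (f x) (f y) ≤ G.edist x y := by
  have walk_bound : ∀ {x y : V} (p : G.Walk x y), H.edist (f x) (f y) ≤ p.length := by
    intro x y p
    induction p with
    | nil => simp
    | @cons u v w huv _ ih =>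
      calc H.edist (f u) (f w) ≤ H.edist (f u) (f v) + H.edist (f v) (f w) := H.edist_triangle
        _ ≤ 1 + _ := add_le_add (hf huv) ih
        _ = _ := by simp [add_comm]
  by_cases hr : G.Reachable x y
  · obtain ⟨p, hp⟩ := hr.exists_walk_length_eq_edist
    exact hp ▸ walk_bound p
  · simp [edist_eq_top_of_not_reachable hr]

lemma Reachable.exists_adj_edist_add_one_le {x y : V} (hr : G.Reachable x y) (hne : x ≠ y) :
    ∃ z, G.Adj x z ∧ G.edist z y + 1 ≤ G.edist x y := by
  obtain ⟨p, hp⟩ := hr.exists_walk_length_eq_edist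
  cases p with
  | nil => exact absurd rfl hne
  | @cons _ z _ hxz q =>
    refine ⟨z, hxz, ?_⟩
    rw [← hp, Walk.length_cons, Nat.cast_add, Nat.cast_one]
    gcongr
    exact edist_le q

lemma two_le_ediam_of_ne_top (hG : G ≠ ⊤) : 2 ≤ G.ediam := by
  have : Nontrivial V := by
    by_contra hV
    rw [not_nontrivial_iff_subsingleton] at hV
    exact hG (by ext x y; simp [Subsingleton.elim x y])
  have h0 : G.ediam ≠ 0 := ediam_ne_zero
  have h1 : G.ediam ≠ 1 := fun h => hG (ediam_eq_one.mp h)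
  induction h : G.ediam using ENat.recTopCoe <;> simp_all
  omega

end SimpleGraph

namespace ILTstep

variable {G : SimpleGraph V}

def parent : V ⊕ V → V := Sum.elim id id

@[simp] lemma parent_inl (x : V) : parent (Sum.inl x) = x := rfl

@[simp] lemma parent_inr (x : V) : parent (Sum.inr x) = x := rfl

lemma edist_parent_le (a b : V ⊕ V) :
    G.edist (parent a) (parent b) ≤ (ILTstep G).edist a b := by
  refine edist_apply_le_of_adj parent (fun a b hab => edist_le_one_iff_adj_or_eq.mpr ?_) a b
  rcases a with x | x <;> rcases b with y | y <;> simp_all [ILTstep, or_comm]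

lemma edist_inl_inl (x y : V) : (ILTstep G).edist (Sum.inl x) (Sum.inl y) = G.edist x y :=
  le_antisymm
    (edist_apply_le_of_adj Sum.inl (fun _ _ h => edist_le_one_iff_adj_or_eq.mpr (Or.inl h)) x y)
    (edist_parent_le (Sum.inl x) (Sum.inl y))

lemma edist_inr_inl_le {x y : V} (hne : x ≠ y) :
    (ILTstep G).edist (Sum.inr x) (Sum.inl y) ≤ G.edist x y := by
  by_cases hr : G.Reachable x y
  · obtain ⟨z, hxz, hz⟩ := hr.exists_adj_edist_add_one_le hne
    have hclone : (ILTstep G).Adj (Sum.inr x) (Sum.inl z) := Or.inr hxz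
    calc (ILTstep G).edist (Sum.inr x) (Sum.inl y)
        ≤ (ILTstep G).edist (Sum.inr x) (Sum.inl z) + (ILTstep G).edist (Sum.inl z) (Sum.inl y) :=
          (ILTstep G).edist_triangle
      _ = G.edist z y + 1 := by rw [edist_eq_one_iff_adj.mpr hclone, edist_inl_inl, add_comm]
      _ ≤ G.edist x y := hz
  · simp [edist_eq_top_of_not_reachable hr]

lemma edist_inr_inl_le_max (x y : V) :
    (ILTstep G).edist (Sum.inr x) (Sum.inl y) ≤ max (G.edist x y) 2 := by
  obtain rfl | hne := eq_or_ne x y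
  · exact (edist_eq_one_iff_adj.mpr (Or.inl rfl)).trans_le (le_max_of_le_right one_le_two)
  · exact (edist_inr_inl_le hne).trans (le_max_left _ _)

lemma edist_inr_inr_le_max (x y : V) :
    (ILTstep G).edist (Sum.inr x) (Sum.inr y) ≤ max (G.edist x y) 2 := by
  obtain rfl | hne := eq_or_ne x y
  · simp
  by_cases hadj : G.Adj x y
  · have hx : (ILTstep G).Adj (Sum.inr x) (Sum.inl x) := Or.inl rfl
    have hy : (ILTstep G).Adj (Sum.inl x) (Sum.inr y) := Or.inr hadj
    exact (edist_le (hx.toWalk.append hy.toWalk)).trans (le_max_of_le_right (by simp))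
  by_cases hr : G.Reachable x y
  · obtain ⟨z, hxz, hz⟩ := hr.exists_adj_edist_add_one_le hne
    have hzy : y ≠ z := by rintro rfl; exact hadj hxz
    have hclone : (ILTstep G).Adj (Sum.inr x) (Sum.inl z) := Or.inr hxz
    calc (ILTstep G).edist (Sum.inr x) (Sum.inr y)
        ≤ (ILTstep G).edist (Sum.inr x) (Sum.inl z) + (ILTstep G).edist (Sum.inl z) (Sum.inr y) :=
          (ILTstep G).edist_triangle
      _ ≤ 1 + G.edist y z := by
          rw [edist_eq_one_iff_adj.mpr hclone, SimpleGraph.edist_comm]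
          gcongr
          exact edist_inr_inl_le hzy
      _ ≤ G.edist x y := by rw [add_comm, SimpleGraph.edist_comm]; exact hz
      _ ≤ max (G.edist x y) 2 := le_max_left _ _
  · simp [edist_eq_top_of_not_reachable hr]

lemma edist_le_max_edist_parent_two (a b : V ⊕ V) :
    (ILTstep G).edist a b ≤ max (G.edist (parent a) (parent b)) 2 := by
  rcases a with x | x <;> rcases b with y | y
  · exact (edist_inl_inl x y).trans_le (le_max_left _ _)
  · rw [SimpleGraph.edist_comm, G.edist_comm]; exact edist_inr_inl_le_max y x
  · exact edist_inr_inl_le_max x y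
  · exact edist_inr_inr_le_max x y

lemma ediam_le_ediam : G.ediam ≤ (ILTstep G).ediam :=
  ediam_le_of_edist_le fun x y => edist_inl_inl (G := G) x y ▸ edist_le_ediam

lemma ediam_le_max_two : (ILTstep G).ediam ≤ max G.ediam 2 :=
  ediam_le_of_edist_le fun a b =>
    (edist_le_max_edist_parent_two a b).trans (max_le_max_right _ edist_le_ediam)

lemma ediam_eq_of_two_le (h : 2 ≤ G.ediam) : (ILTstep G).ediam = G.ediam :=
  le_antisymm (ediam_le_max_two.trans (max_eq_left h).le) ediam_le_ediam

lemma ne_top [Nontrivial V] : ILTstep G ≠ ⊤ := by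
  obtain ⟨x, y, hxy⟩ := exists_pair_ne V
  intro h
  have hclones : (⊤ : SimpleGraph (V ⊕ V)).Adj (Sum.inr x) (Sum.inr y) := by simpa using hxy
  rw [← h] at hclones
  exact hclones

lemma ediam_top_eq_two [Nontrivial V] : (ILTstep (⊤ : SimpleGraph V)).ediam = 2 :=
  le_antisymm (ediam_le_max_two.trans (by simp [SimpleGraph.ediam_top]))
    (two_le_ediam_of_ne_top ne_top)

end ILTstep

lemma ediam_ILTG_add {G : SimpleGraph V} {s : ℕ} (h : 2 ≤ (ILTG G s).ediam) :
    ∀ t, (ILTG G (s + t)).ediam = (ILTG G s).ediam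
  | 0 => rfl
  | t + 1 => by
    have ih := ediam_ILTG_add h t
    exact (ILTstep.ediam_eq_of_two_le (ih ▸ h)).trans ih

theorem ILT_diam_general [Fintype V] (G : SimpleGraph V) :
    (G ≠ ⊤ → ∀ t, (ILTG G t).diam = G.diam) ∧
    (G = ⊤ → 1 < Fintype.card V → ∀ t, 1 ≤ t → (ILTG G t).diam = 2) := by
  constructor
  · intro hG t
    have h := ediam_ILTG_add (s := 0) (two_le_ediam_of_ne_top hG) t
    rw [zero_add] at h
    exact congrArg ENat.toNat h
  · rintro rfl hcard t ht
    have : Nontrivial V := Fintype.one_lt_card_iff_nontrivial.mp hcard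
    have h1 : (ILTG (⊤ : SimpleGraph V) 1).ediam = 2 := ILTstep.ediam_top_eq_two (V := V)
    obtain ⟨s, rfl⟩ := Nat.exists_eq_add_of_le ht
    exact congrArg ENat.toNat ((ediam_ILTG_add (h1 ▸ le_rfl) s).trans h1)

theorem ILT_diam [Fintype V] (G : SimpleGraph V) (hG : G.Connected) :
    (G ≠ ⊤ → ∀ t, (ILTG G t).diam = G.diam) ∧
    (G = ⊤ → 1 < Fintype.card V → ∀ t, 1 ≤ t → (ILTG G t).diam = 2) :=
  ILT_diam_general G
end
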